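/- arXiv:1712.04487 — 5 statements merged into one kernel-verified Lean document; each statement's English description precedes it below -/
import Mathlib

section
/- Let (π, p) be a mixture with 3 components and define g(t) = J((π_{12,t}, π_{23,t}), (p_{12,t}, p_{23,t})) where π_{12,t} = π_1 + (1−t)π_2, π_{23,t} = tπ_2 + π_3, p_{12,t} = (π_1 p_1 + (1−t)π_2 p_2)/π_{12,t}, p_{23,t} = (tπ_2 p_2 + π_3 p_3)/π_{23,t}, and J is the Jensen–Shannon divergence. Then for all t ∈ [0,1], g(t) ≤ t·g(1) + (1−t)·g(0). -/
open MeasureTheory Real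

noncomputable def entropy (f : ℝ → ℝ) : ℝ := -∫ x, f x * Real.log (f x)

noncomputable def p12t (w1 w2 : ℝ) (p1 p2 : ℝ → ℝ) (t : ℝ) : ℝ → ℝ :=
  fun x => (w1 * p1 x + (1 - t) * w2 * p2 x) / (w1 + (1 - t) * w2)

noncomputable def p23t (w2 w3 : ℝ) (p2 p3 : ℝ → ℝ) (t : ℝ) : ℝ → ℝ :=
  fun x => (t * w2 * p2 x + w3 * p3 x) / (t * w2 + w3)

/-- The Jensen–Shannon divergence along the two-component perturbation path. -/
noncomputable def g (w1 w2 w3 : ℝ) (p1 p2 p3 : ℝ → ℝ) (t : ℝ) : ℝ :=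
  entropy (fun x => w1 * p1 x + w2 * p2 x + w3 * p3 x)
    - ((w1 + (1 - t) * w2) * entropy (p12t w1 w2 p1 p2 t)
       + (t * w2 + w3) * entropy (p23t w2 w3 p2 p3 t))

/-!
Both path densities are mixtures of their endpoint densities: `p12t t` mixes `p12t 1 = p1` and
`p12t 0 = p12` with weights `t π₁` and `(1 - t) π₁₂`, whose sum `π₁ + (1 - t) π₂` is exactly the
weight `g` puts on `H (p12t t)`; likewise for `p23t`. Concavity of `H`, in the homogeneous form
`a H f₁ + b H f₂ ≤ (a + b) H ((a f₁ + b f₂) / (a + b))`, therefore bounds each weighted entropy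
term of `g t` from below by the interpolation of its values at `t = 1` and `t = 0`, while the
entropy of the full mixture does not depend on `t`.
-/

noncomputable def normalizedMix (a b : ℝ) (f₁ f₂ : ℝ → ℝ) : ℝ → ℝ :=
  fun x => (a * f₁ x + b * f₂ x) / (a + b)

theorem ConvexOn.add_mul_map_div_le {s : Set ℝ} {φ : ℝ → ℝ} (hφ : ConvexOn ℝ s φ)
    {u v a b : ℝ} (hu : u ∈ s) (hv : v ∈ s) (ha : 0 ≤ a) (hb : 0 ≤ b) :
    (a + b) * φ ((a * u + b * v) / (a + b)) ≤ a * φ u + b * φ v := by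
  rcases (add_nonneg ha hb).eq_or_lt with hab | hab
  · obtain ⟨rfl, rfl⟩ : a = 0 ∧ b = 0 := ⟨by linarith, by linarith⟩
    simp
  · have hconv := hφ.2 hu hv (div_nonneg ha hab.le) (div_nonneg hb hab.le)
      (by field_simp)
    simp only [smul_eq_mul] at hconv
    calc (a + b) * φ ((a * u + b * v) / (a + b))
        = (a + b) * φ (a / (a + b) * u + b / (a + b) * v) := by
          congr 2; field_simp
      _ ≤ (a + b) * (a / (a + b) * φ u + b / (a + b) * φ v) := by gcongr
      _ = a * φ u + b * φ v := by field_simp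

theorem add_mul_entropy_le_entropy_normalizedMix {a b : ℝ} (ha : 0 ≤ a) (hb : 0 ≤ b)
    {f₁ f₂ : ℝ → ℝ} (hf₁ : ∀ x, 0 ≤ f₁ x) (hf₂ : ∀ x, 0 ≤ f₂ x)
    (hi₁ : Integrable (fun x => f₁ x * log (f₁ x)))
    (hi₂ : Integrable (fun x => f₂ x * log (f₂ x)))
    (hi : Integrable (fun x => normalizedMix a b f₁ f₂ x * log (normalizedMix a b f₁ f₂ x))) :
    a * entropy f₁ + b * entropy f₂ ≤ (a + b) * entropy (normalizedMix a b f₁ f₂) := by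
  have hpointwise : ∀ x, (a + b) * (normalizedMix a b f₁ f₂ x * log (normalizedMix a b f₁ f₂ x))
      ≤ a * (f₁ x * log (f₁ x)) + b * (f₂ x * log (f₂ x)) :=
    fun x => convexOn_mul_log.add_mul_map_div_le (hf₁ x) (hf₂ x) ha hb
  have hintegral := integral_mono (hi.const_mul _) ((hi₁.const_mul a).add (hi₂.const_mul b))
    hpointwise
  simp only [Pi.add_apply] at hintegral
  rw [integral_const_mul, integral_add (hi₁.const_mul a) (hi₂.const_mul b), integral_const_mul,
    integral_const_mul] at hintegral
  simp only [entropy]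
  linarith

section Path

variable {w1 w2 w3 : ℝ} {p1 p2 p3 : ℝ → ℝ}

theorem p12t_nonneg (hw1 : 0 ≤ w1) (hw2 : 0 ≤ w2) (hp1 : ∀ x, 0 ≤ p1 x) (hp2 : ∀ x, 0 ≤ p2 x)
    {s : ℝ} (hs : s ≤ 1) (x : ℝ) : 0 ≤ p12t w1 w2 p1 p2 s x := by
  have hs' : 0 ≤ 1 - s := sub_nonneg.2 hs
  exact div_nonneg (add_nonneg (mul_nonneg hw1 (hp1 x)) (mul_nonneg (mul_nonneg hs' hw2) (hp2 x)))
    (add_nonneg hw1 (mul_nonneg hs' hw2))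

theorem p23t_nonneg (hw2 : 0 ≤ w2) (hw3 : 0 ≤ w3) (hp2 : ∀ x, 0 ≤ p2 x) (hp3 : ∀ x, 0 ≤ p3 x)
    {s : ℝ} (hs : 0 ≤ s) (x : ℝ) : 0 ≤ p23t w2 w3 p2 p3 s x :=
  div_nonneg (add_nonneg (mul_nonneg (mul_nonneg hs hw2) (hp2 x)) (mul_nonneg hw3 (hp3 x)))
    (add_nonneg (mul_nonneg hs hw2) hw3)

theorem p12t_eq_normalizedMix (hw12 : w1 + w2 ≠ 0) (t : ℝ) :
    p12t w1 w2 p1 p2 t = normalizedMix (t * w1) ((1 - t) * (w1 + w2))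
      (p12t w1 w2 p1 p2 1) (p12t w1 w2 p1 p2 0) := by
  funext x
  simp only [p12t, normalizedMix, sub_self, sub_zero, zero_mul, add_zero, one_mul]
  rw [show t * w1 + (1 - t) * (w1 + w2) = w1 + (1 - t) * w2 by ring]
  congr 1
  field_simp
  ring

theorem p23t_eq_normalizedMix (hw23 : w2 + w3 ≠ 0) (t : ℝ) :
    p23t w2 w3 p2 p3 t = normalizedMix (t * (w2 + w3)) ((1 - t) * w3)
      (p23t w2 w3 p2 p3 1) (p23t w2 w3 p2 p3 0) := by
  funext x
  simp only [p23t, normalizedMix, one_mul, zero_mul, zero_add]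
  rw [show t * (w2 + w3) + (1 - t) * w3 = t * w2 + w3 by ring]
  congr 1
  field_simp
  ring

end Path

theorem JS_convex_along_path_general
    (w1 w2 w3 : ℝ) (h1 : 0 < w1) (h2 : 0 < w2) (h3 : 0 < w3)
    (p1 p2 p3 : ℝ → ℝ)
    (hp1 : ∀ x, 0 ≤ p1 x) (hp2 : ∀ x, 0 ≤ p2 x) (hp3 : ∀ x, 0 ≤ p3 x)
    (hent12 : ∀ s ∈ Set.Icc (0 : ℝ) 1,
      Integrable (fun x => p12t w1 w2 p1 p2 s x * Real.log (p12t w1 w2 p1 p2 s x)))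
    (hent23 : ∀ s ∈ Set.Icc (0 : ℝ) 1,
      Integrable (fun x => p23t w2 w3 p2 p3 s x * Real.log (p23t w2 w3 p2 p3 s x)))
    (t : ℝ) (ht : t ∈ Set.Icc (0 : ℝ) 1) :
    g w1 w2 w3 p1 p2 p3 t
      ≤ t * g w1 w2 w3 p1 p2 p3 1 + (1 - t) * g w1 w2 w3 p1 p2 p3 0 := by
  have hmem0 : (0 : ℝ) ∈ Set.Icc (0 : ℝ) 1 := ⟨le_rfl, zero_le_one⟩
  have hmem1 : (1 : ℝ) ∈ Set.Icc (0 : ℝ) 1 := ⟨zero_le_one, le_rfl⟩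
  have hmix12 := p12t_eq_normalizedMix (p1 := p1) (p2 := p2) (add_pos h1 h2).ne' t
  have hmix23 := p23t_eq_normalizedMix (p2 := p2) (p3 := p3) (add_pos h2 h3).ne' t
  have key12 := add_mul_entropy_le_entropy_normalizedMix (mul_nonneg ht.1 h1.le)
    (mul_nonneg (sub_nonneg.2 ht.2) (add_pos h1 h2).le)
    (p12t_nonneg h1.le h2.le hp1 hp2 le_rfl) (p12t_nonneg h1.le h2.le hp1 hp2 zero_le_one)
    (hent12 1 hmem1) (hent12 0 hmem0) (hmix12 ▸ hent12 t ht)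
  have key23 := add_mul_entropy_le_entropy_normalizedMix
    (mul_nonneg ht.1 (add_pos h2 h3).le) (mul_nonneg (sub_nonneg.2 ht.2) h3.le)
    (p23t_nonneg h2.le h3.le hp2 hp3 zero_le_one) (p23t_nonneg h2.le h3.le hp2 hp3 le_rfl)
    (hent23 1 hmem1) (hent23 0 hmem0) (hmix23 ▸ hent23 t ht)
  rw [← hmix12] at key12
  rw [← hmix23] at key23
  unfold g
  linear_combination key12 + key23

/-- Convexity of the Jensen–Shannon divergence along the perturbation path. -/
theorem JS_convex_along_path
    (w1 w2 w3 : ℝ) (h1 : 0 < w1) (h2 : 0 < w2) (h3 : 0 < w3)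
    (h1' : w1 ≤ 1) (h2' : w2 ≤ 1) (h3' : w3 ≤ 1)
    (hsum : w1 + w2 + w3 = 1)
    (p1 p2 p3 : ℝ → ℝ)
    (hp1 : ∀ x, 0 ≤ p1 x) (hp2 : ∀ x, 0 ≤ p2 x) (hp3 : ∀ x, 0 ≤ p3 x)
    (hi1 : ∫ x, p1 x = 1) (hi2 : ∫ x, p2 x = 1) (hi3 : ∫ x, p3 x = 1)
    (hent1 : Integrable (fun x => p1 x * Real.log (p1 x)))
    (hent2 : Integrable (fun x => p2 x * Real.log (p2 x)))
    (hent3 : Integrable (fun x => p3 x * Real.log (p3 x)))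
    (hmix : Integrable (fun x => (w1 * p1 x + w2 * p2 x + w3 * p3 x)
        * Real.log (w1 * p1 x + w2 * p2 x + w3 * p3 x)))
    (hent12 : ∀ s ∈ Set.Icc (0 : ℝ) 1,
      Integrable (fun x => p12t w1 w2 p1 p2 s x * Real.log (p12t w1 w2 p1 p2 s x)))
    (hent23 : ∀ s ∈ Set.Icc (0 : ℝ) 1,
      Integrable (fun x => p23t w2 w3 p2 p3 s x * Real.log (p23t w2 w3 p2 p3 s x)))
    (t : ℝ) (ht : t ∈ Set.Icc (0 : ℝ) 1) :
    g w1 w2 w3 p1 p2 p3 t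
      ≤ t * g w1 w2 w3 p1 p2 p3 1 + (1 - t) * g w1 w2 w3 p1 p2 p3 0 :=
  JS_convex_along_path_general w1 w2 w3 h1 h2 h3 p1 p2 p3 hp1 hp2 hp3 hent12 hent23 t ht
end

section
/- Let y_0, …, y_N be nonnegative reals with y_0 = 0 = y_N and suppose there exist integers ℓ, u with 0 < ℓ ≤ u < N such that y_0 ≤ … ≤ y_{ℓ−1} < y_ℓ = … = y_u > y_{u+1} ≥ … ≥ y_N. Fix r with 1 ≤ r ≤ N−1 and ε ≥ 0, and define y'_k = y_k − δ_{kr}·ε (subtract ε at index r only). Then the sequence y' is nonnegative and unimodal (i.e., nondecreasing up to some index and nonincreasing after) if and only if ε ≤ y_r − min{y_{r−1}, y_{r+1}}. -/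
/-- A finite sequence `y 0, …, y N` is unimodal if it is nondecreasing up to
some index `m ≤ N` and nonincreasing afterwards. -/
def UnimodalOn (y : ℕ → ℝ) (N : ℕ) : Prop :=
  ∃ m ≤ N, (∀ i, i + 1 ≤ m → y i ≤ y (i + 1)) ∧
    (∀ i, m ≤ i → i + 1 ≤ N → y (i + 1) ≤ y i)

/-- The "give" direction of the perturbation lemma: subtracting `ε ≥ 0` at
index `r` preserves nonnegativity and unimodality iff
`ε ≤ y r - min (y (r-1)) (y (r+1))`. -/
theorem give_perturbation (N l u : ℕ) (y : ℕ → ℝ)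
    (hl : 0 < l) (hlu : l ≤ u) (hu : u < N)
    (h0 : y 0 = 0) (hN : y N = 0)
    (hnn : ∀ k ≤ N, 0 ≤ y k)
    (hasc : ∀ i, i + 1 ≤ l - 1 → y i ≤ y (i + 1))
    (hstrict : y (l - 1) < y l)
    (hplateau : ∀ i, l ≤ i → i ≤ u → y i = y l)
    (hdrop : y (u + 1) < y u)
    (hdesc : ∀ i, u + 1 ≤ i → i + 1 ≤ N → y (i + 1) ≤ y i)
    (r : ℕ) (hr1 : 1 ≤ r) (hrN : r ≤ N - 1)
    (ε : ℝ) (hε : 0 ≤ ε) :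
    ((∀ k ≤ N, 0 ≤ (fun k => y k - if k = r then ε else 0) k) ∧
        UnimodalOn (fun k => y k - if k = r then ε else 0) N)
      ↔ ε ≤ y r - min (y (r - 1)) (y (r + 1)) := by
  have hrN' : r + 1 ≤ N := by omega
  set g : ℕ → ℝ := fun k => y k - if k = r then ε else 0 with hg
  have gEq : ∀ k, k ≠ r → g k = y k := by intro k hk; simp [hg, hk]
  have gr : g r = y r - ε := by simp [hg]
  have asc1 : ∀ i, i + 1 ≤ u → y i ≤ y (i + 1) := by
    intro i hi
    rcases Nat.lt_or_ge i l with h | h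
    · rcases Nat.lt_or_ge (i + 1) l with h2 | h2
      · exact hasc i (by omega)
      · have e1 : i = l - 1 := by omega
        have e2 : i + 1 = l := by omega
        rw [e2, e1]
        exact hstrict.le
    · have e1 : y i = y l := hplateau i h (by omega)
      have e2 : y (i + 1) = y l := hplateau (i + 1) (by omega) hi
      rw [e2, e1]
  have desc1 : ∀ i, l ≤ i → i + 1 ≤ N → y (i + 1) ≤ y i := by
    intro i h1 h2
    rcases Nat.lt_or_ge i u with h | h
    · rw [hplateau i h1 (by omega), hplateau (i + 1) (by omega) (by omega)]
    · rcases Nat.eq_or_lt_of_le h with h3 | h3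
      · rw [← h3]
        exact hdrop.le
      · exact hdesc i h3 h2
  have hmn : 0 ≤ min (y (r - 1)) (y (r + 1)) :=
    le_min (hnn _ (by omega)) (hnn _ (by omega))
  constructor
  · rintro ⟨-, m, hmN, hup, hdn⟩
    by_contra hcon
    push_neg at hcon
    have ha : y r - ε < y (r - 1) := by
      have := min_le_left (y (r - 1)) (y (r + 1)); linarith
    have hb : y r - ε < y (r + 1) := by
      have := min_le_right (y (r - 1)) (y (r + 1)); linarith
    rcases Nat.lt_or_ge m r with h | h
    · have := hdn r (by omega) hrN'
      rw [gEq (r + 1) (by omega), gr] at this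
      linarith
    · have := hup (r - 1) (by omega)
      have e : r - 1 + 1 = r := by omega
      rw [e, gEq (r - 1) (by omega), gr] at this
      linarith
  · intro hle
    have hnn' : ∀ k ≤ N, 0 ≤ g k := by
      intro k hk
      by_cases h : k = r
      · subst h; rw [gr]; linarith
      · rw [gEq k h]; exact hnn k hk
    refine ⟨hnn', ?_⟩
    unfold UnimodalOn
    have key : y (r - 1) ≤ y r - ε ∨ y (r + 1) ≤ y r - ε := by
      rcases le_total (y (r - 1)) (y (r + 1)) with h | h
      · left; linarith [min_eq_left h]
      · right; linarith [min_eq_right h]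
    rcases Nat.lt_or_ge r l with hpos | hpos
    · -- r < l : mode u
      have a1 : y (r - 1) ≤ y r := by
        have e : r - 1 + 1 = r := by omega
        have := asc1 (r - 1) (by omega); rwa [e] at this
      have a2 : y r ≤ y (r + 1) := asc1 r (by omega)
      have h1 : y (r - 1) ≤ y r - ε := by
        linarith [min_eq_left (show y (r - 1) ≤ y (r + 1) by linarith)]
      refine ⟨u, by omega, ?_, ?_⟩
      · intro i hi
        by_cases e1 : i + 1 = r
        · have e2 : i = r - 1 := by omega
          rw [e1, gr, e2, gEq (r - 1) (by omega)]
          exact h1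
        · by_cases e2 : i = r
          · rw [e2, gr, gEq (r + 1) (by omega)]
            linarith
          · rw [gEq i e2, gEq (i + 1) e1]
            exact asc1 i hi
      · intro i hi1 hi2
        rw [gEq i (by omega), gEq (i + 1) (by omega)]
        exact desc1 i (by omega) hi2
    rcases Nat.lt_or_ge u r with hpos2 | hpos2
    · -- u < r : mode u
      have a1 : y r ≤ y (r - 1) := by
        have e : r - 1 + 1 = r := by omega
        have := desc1 (r - 1) (by omega) (by omega); rwa [e] at this
      have a2 : y (r + 1) ≤ y r := desc1 r (by omega) hrN'
      have h2 : y (r + 1) ≤ y r - ε := by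
        linarith [min_eq_right (show y (r + 1) ≤ y (r - 1) by linarith)]
      refine ⟨u, by omega, ?_, ?_⟩
      · intro i hi
        rw [gEq i (by omega), gEq (i + 1) (by omega)]
        exact asc1 i hi
      · intro i hi1 hi2
        by_cases e1 : i + 1 = r
        · have e2 : i = r - 1 := by omega
          rw [e1, gr, e2, gEq (r - 1) (by omega)]
          linarith
        · by_cases e2 : i = r
          · rw [e2, gr, gEq (r + 1) (by omega)]
            exact h2
          · rw [gEq i e2, gEq (i + 1) e1]
            exact desc1 i (by omega) hi2
    · -- l ≤ r ≤ u
      rcases le_or_gt (y (r + 1)) (y r - ε) with hR | hR'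
      · rcases le_or_gt (y (r - 1)) (y r - ε) with hL | hL'
        · -- mode r
          refine ⟨r, by omega, ?_, ?_⟩
          · intro i hi
            by_cases e1 : i + 1 = r
            · have e2 : i = r - 1 := by omega
              rw [e1, gr, e2, gEq (r - 1) (by omega)]; exact hL
            · rw [gEq i (by omega), gEq (i + 1) e1]
              exact asc1 i (by omega)
          · intro i hi1 hi2
            by_cases e2 : i = r
            · rw [e2, gr, gEq (r + 1) (by omega)]; exact hR
            · rw [gEq i e2, gEq (i + 1) (by omega)]
              exact desc1 i (by omega) hi2
        · -- mode r - 1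
          refine ⟨r - 1, by omega, ?_, ?_⟩
          · intro i hi
            rw [gEq i (by omega), gEq (i + 1) (by omega)]
            exact asc1 i (by omega)
          · intro i hi1 hi2
            by_cases e1 : i + 1 = r
            · have e2 : i = r - 1 := by omega
              rw [e1, gr, e2, gEq (r - 1) (by omega)]; linarith
            · by_cases e2 : i = r
              · rw [e2, gr, gEq (r + 1) (by omega)]; exact hR
              · rw [gEq i e2, gEq (i + 1) e1]
                exact desc1 i (by omega) hi2
      · -- mode r + 1
        have hL : y (r - 1) ≤ y r - ε := key.resolve_right (not_le.mpr hR')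
        refine ⟨r + 1, by omega, ?_, ?_⟩
        · intro i hi
          by_cases e1 : i + 1 = r
          · have e2 : i = r - 1 := by omega
            rw [e1, gr, e2, gEq (r - 1) (by omega)]; exact hL
          · by_cases e2 : i = r
            · rw [e2, gr, gEq (r + 1) (by omega)]; linarith
            · rw [gEq i e2, gEq (i + 1) e1]
              exact asc1 i (by omega)
        · intro i hi1 hi2
          rw [gEq i (by omega), gEq (i + 1) (by omega)]
          exact desc1 i (by omega) hi2
end

section
/- Let y_0, …, y_N be nonnegative reals with y_0 = 0 = y_N and suppose there exist integers ℓ, u with 0 < ℓ ≤ u < N such that y_0 ≤ … ≤ y_{ℓ−1} < y_ℓ = … = y_u > y_{u+1} ≥ … ≥ y_N. Fix r with 1 ≤ r ≤ N−1 and ε ≥ 0, and define y'_k = y_k + δ_{kr}·ε (add ε at index r only). Then y' is nonnegative and unimodal if and only if either ℓ−1 ≤ r ≤ u+1 (in which case any ε ≥ 0 works), or ε ≤ max{y_{r−1}, y_{r+1}} − y_r. -/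
/-- The "take" direction of the perturbation lemma: adding `ε ≥ 0` at index `r`
preserves nonnegativity and unimodality iff either `ℓ - 1 ≤ r ≤ u + 1`
(any `ε` works) or `ε ≤ max (y (r-1)) (y (r+1)) - y r`. -/
theorem take_perturbation (N l u : ℕ) (y : ℕ → ℝ)
    (hl : 0 < l) (hlu : l ≤ u) (hu : u < N)
    (h0 : y 0 = 0) (hN : y N = 0)
    (hnn : ∀ k ≤ N, 0 ≤ y k)
    (hasc : ∀ i, i + 1 ≤ l - 1 → y i ≤ y (i + 1))
    (hstrict : y (l - 1) < y l)
    (hplateau : ∀ i, l ≤ i → i ≤ u → y i = y l)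
    (hdrop : y (u + 1) < y u)
    (hdesc : ∀ i, u + 1 ≤ i → i + 1 ≤ N → y (i + 1) ≤ y i)
    (r : ℕ) (hr1 : 1 ≤ r) (hrN : r ≤ N - 1)
    (ε : ℝ) (hε : 0 ≤ ε) :
    ((∀ k ≤ N, 0 ≤ (fun k => y k + if k = r then ε else 0) k) ∧
        UnimodalOn (fun k => y k + if k = r then ε else 0) N)
      ↔ ((l - 1 ≤ r ∧ r ≤ u + 1) ∨ ε ≤ max (y (r - 1)) (y (r + 1)) - y r) := by
  set y' : ℕ → ℝ := fun k => y k + if k = r then ε else 0 with hy'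
  have hNe : ∀ k, k ≠ r → y' k = y k := fun k hk => by simp [hy', hk]
  have hEr : y' r = y r + ε := by simp [hy']
  have hl1 : l - 1 + 1 = l := by omega
  have hr1' : r - 1 + 1 = r := by omega
  have hrN' : r + 1 ≤ N := by omega
  have stepup : ∀ i, i + 1 ≤ u → y i ≤ y (i + 1) := by
    intro i hi
    rcases Nat.lt_or_ge (i + 1) l with h | h
    · exact hasc i (by omega)
    · rcases Nat.lt_or_ge i l with h2 | h2
      · have hie : i = l - 1 := by omega
        have hie2 : i + 1 = l := by omega
        rw [hie, hl1]
        exact hstrict.le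
      · rw [hplateau i h2 (by omega), hplateau (i + 1) h (by omega)]
  have stepdownl : ∀ i, l ≤ i → i + 1 ≤ N → y (i + 1) ≤ y i := by
    intro i hi hiN
    rcases Nat.lt_or_ge i u with h | h
    · rw [hplateau i hi (by omega), hplateau (i + 1) (by omega) (by omega)]
    · rcases Nat.eq_or_lt_of_le h with h2 | h2
      · rw [← h2]; exact hdrop.le
      · exact hdesc i (by omega) hiN
  have key : l - 1 ≤ r → r ≤ u + 1 → UnimodalOn y' N := by
    intro hA hB
    rcases Nat.lt_or_ge r l with hrl | hrl
    · -- r = l - 1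
      have hrv : l - 1 = r := by omega
      by_cases hcc : y l ≤ y (l - 1) + ε
      · refine ⟨r, by omega, ?_, ?_⟩
        · intro i hi
          rw [hNe i (by omega)]
          rcases eq_or_ne (i + 1) r with h | h
          · rw [h, hEr]
            have h2 := hasc i (by omega)
            rw [h] at h2; linarith
          · rw [hNe _ h]; exact hasc i (by omega)
        · intro i hi hiN
          rcases eq_or_ne i r with h | h
          · subst h
            rw [hEr]
            rw [hNe (i + 1) (by omega)]
            have h2 : i + 1 = l := by omega
            rw [h2, ← hrv]
            linarith
          · rw [hNe i h, hNe (i + 1) (by omega)]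
            exact stepdownl i (by omega) hiN
      · push_neg at hcc
        refine ⟨u, by omega, ?_, ?_⟩
        · intro i hi
          rcases eq_or_ne i r with h | h
          · subst h
            rw [hEr, hNe (i + 1) (by omega)]
            have h2 : i + 1 = l := by omega
            rw [h2, ← hrv]
            linarith
          · rw [hNe i h]
            rcases eq_or_ne (i + 1) r with h2 | h2
            · rw [h2, hEr]
              have h3 := stepup i (by omega)
              rw [h2] at h3; linarith
            · rw [hNe _ h2]; exact stepup i hi
        · intro i hi hiN
          rw [hNe i (by omega), hNe (i + 1) (by omega)]
          exact stepdownl i (by omega) hiN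
    · rcases Nat.lt_or_ge u r with hur | hur
      · -- r = u + 1
        have hrv : r = u + 1 := by omega
        by_cases hcc : y u ≤ y (u + 1) + ε
        · refine ⟨r, by omega, ?_, ?_⟩
          · intro i hi
            rw [hNe i (by omega)]
            rcases eq_or_ne (i + 1) r with h | h
            · have h2 : i = u := by omega
              rw [h, hEr, h2, hrv]
              exact hcc
            · rw [hNe _ h]; exact stepup i (by omega)
          · intro i hi hiN
            rcases eq_or_ne i r with h | h
            · subst h
              rw [hEr, hNe (i + 1) (by omega)]
              have h2 := hdesc i (by omega) hiN
              linarith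
            · rw [hNe i h, hNe (i + 1) (by omega)]
              exact stepdownl i (by omega) hiN
        · push_neg at hcc
          refine ⟨u, by omega, ?_, ?_⟩
          · intro i hi
            rw [hNe i (by omega), hNe (i + 1) (by omega)]
            exact stepup i hi
          · intro i hi hiN
            rcases eq_or_ne i r with h | h
            · subst h
              rw [hEr, hNe (i + 1) (by omega)]
              have h2 := hdesc i (by omega) hiN
              linarith
            · rcases eq_or_ne (i + 1) r with h2 | h2
              · have h3 : i = u := by omega
                rw [hNe i h, h2, hEr, h3, hrv]
                linarith
              · rw [hNe i h, hNe _ h2]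
                exact stepdownl i (by omega) hiN
      · -- l ≤ r ≤ u
        refine ⟨r, by omega, ?_, ?_⟩
        · intro i hi
          rw [hNe i (by omega)]
          rcases eq_or_ne (i + 1) r with h | h
          · rw [h, hEr]
            have h2 := stepup i (by omega)
            rw [h] at h2; linarith
          · rw [hNe _ h]; exact stepup i (by omega)
        · intro i hi hiN
          rcases eq_or_ne i r with h | h
          · subst h
            rw [hEr, hNe (i + 1) (by omega)]
            have h2 := stepdownl i (by omega) hiN
            linarith
          · rw [hNe i h, hNe (i + 1) (by omega)]
            exact stepdownl i (by omega) hiN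
  constructor
  · rintro ⟨-, hm⟩
    obtain ⟨m, hmN, hup, hdown⟩ := hm
    by_cases hc : l - 1 ≤ r ∧ r ≤ u + 1
    · exact Or.inl hc
    · right
      rcases Nat.lt_or_ge r (l - 1) with hrl | hru
      · have hm1 : r + 1 ≤ m := by
          by_contra hmr
          push_neg at hmr
          have h1 := hdown (l - 1) (by omega) (by omega)
          rw [hl1, hNe (l - 1) (by omega), hNe l (by omega)] at h1
          linarith
        have h2 := hup r hm1
        rw [hEr, hNe (r + 1) (by omega)] at h2
        have h3 : y (r + 1) ≤ max (y (r - 1)) (y (r + 1)) := le_max_right _ _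
        linarith
      · have hru2 : u + 2 ≤ r := by omega
        have hm1 : m ≤ r - 1 := by
          by_contra hmr
          push_neg at hmr
          have h1 := hup u (by omega)
          rw [hNe u (by omega), hNe (u + 1) (by omega)] at h1
          linarith
        have h2 := hdown (r - 1) hm1 (by omega)
        rw [hr1', hEr, hNe (r - 1) (by omega)] at h2
        have h3 : y (r - 1) ≤ max (y (r - 1)) (y (r + 1)) := le_max_left _ _
        linarith
  · intro h
    constructor
    · intro k hk
      have h1 : (0 : ℝ) ≤ if k = r then ε else 0 := by split <;> simp [hε]
      simpa using add_nonneg (hnn k hk) h1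
    rcases h with ⟨h1, h2⟩ | hεm
    · exact key h1 h2
    · by_cases hc : l - 1 ≤ r ∧ r ≤ u + 1
      · exact key hc.1 hc.2
      · rcases Nat.lt_or_ge r (l - 1) with hrl | hru
        · have ha1 : y (r - 1) ≤ y r := by
            have h2 := hasc (r - 1) (by omega)
            rwa [hr1'] at h2
          have ha2 : y r ≤ y (r + 1) := hasc r (by omega)
          have hmax : max (y (r - 1)) (y (r + 1)) = y (r + 1) :=
            max_eq_right (by linarith)
          have hkey : y r + ε ≤ y (r + 1) := by rw [hmax] at hεm; linarith
          refine ⟨u, by omega, ?_, ?_⟩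
          · intro i hi
            rcases eq_or_ne i r with h | h
            · subst h
              rw [hEr, hNe (i + 1) (by omega)]
              exact hkey
            · rw [hNe i h]
              rcases eq_or_ne (i + 1) r with h2 | h2
              · rw [h2, hEr]
                have h3 := stepup i hi
                rw [h2] at h3; linarith
              · rw [hNe _ h2]; exact stepup i hi
          · intro i hi hiN
            rw [hNe i (by omega), hNe (i + 1) (by omega)]
            exact stepdownl i (by omega) hiN
        · have hru2 : u + 2 ≤ r := by omega
          have hd1 : y r ≤ y (r - 1) := by
            have h2 := hdesc (r - 1) (by omega) (by omega)
            rwa [hr1'] at h2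
          have hd2 : y (r + 1) ≤ y r := hdesc r (by omega) (by omega)
          have hkey : y r + ε ≤ y (r - 1) := by
            have hmax : max (y (r - 1)) (y (r + 1)) = y (r - 1) :=
              max_eq_left (by linarith)
            rw [hmax] at hεm; linarith
          refine ⟨u, by omega, ?_, ?_⟩
          · intro i hi
            rw [hNe i (by omega), hNe (i + 1) (by omega)]
            exact stepup i hi
          · intro i hi hiN
            rcases eq_or_ne i r with h | h
            · subst h
              rw [hEr, hNe (i + 1) (by omega)]
              linarith
            · rw [hNe i h]
              rcases eq_or_ne (i + 1) r with h2 | h2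
              · rw [h2, hEr]
                have h3 : i = r - 1 := by omega
                rw [h3]
                exact hkey
              · rw [hNe _ h2]
                exact stepdownl i (by omega) hiN
end

section
/- Let (π,p) be a mixture realizing the unimodal category of f (so ⟨π,p⟩ = f and |(π,p)| = ucat(f)), and let g be a density such that each p_m * g is unimodal. Then (π, p*g) is a unimodal mixture with mixture density f * g, and consequently ucat(f * g) ≤ ucat(f). -/
open MeasureTheory

def IsDensity (f : ℝ → ℝ) : Prop := (∀ x, 0 ≤ f x) ∧ ∫ x, f x = 1

/-- Unimodal: every superlevel set is convex (empty or an interval). -/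
def IsUnimodalFn (f : ℝ → ℝ) : Prop := ∀ t : ℝ, Convex ℝ {x | t ≤ f x}

/-- `(w, p)` is a unimodal mixture with density `f`. -/
def IsUnimodalMixture {M : ℕ} (w : Fin M → ℝ) (p : Fin M → ℝ → ℝ)
    (f : ℝ → ℝ) : Prop :=
  (∀ m, 0 < w m) ∧ (∑ m, w m = 1) ∧ (∀ m, IsUnimodalFn (p m)) ∧
    (∀ x, ∑ m, w m * p m x = f x)

/-- The unimodal category of `f`. -/
noncomputable def ucat (f : ℝ → ℝ) : ℕ :=
  sInf {M : ℕ | ∃ w : Fin M → ℝ, ∃ p : Fin M → ℝ → ℝ, IsUnimodalMixture w p f}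

noncomputable def conv (f g : ℝ → ℝ) : ℝ → ℝ := fun x => ∫ y, f (x - y) * g y

/-- If `(w, p)` realizes the unimodal category of `f` and each `p m * g` is
unimodal, then `(w, p * g)` is a unimodal mixture with density `f * g`, and
`ucat (f * g) ≤ ucat f`. -/
theorem ucat_conv_le (M : ℕ) (f : ℝ → ℝ) (w : Fin M → ℝ) (p : Fin M → ℝ → ℝ)
    (hmix : IsUnimodalMixture w p f) (hM : M = ucat f)
    (g : ℝ → ℝ) (hg : IsDensity g)
    (hpg : ∀ m, IsUnimodalFn (conv (p m) g))
    (hint : ∀ m x, Integrable (fun y => p m (x - y) * g y)) :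
    IsUnimodalMixture w (fun m => conv (p m) g) (conv f g) ∧
      ucat (conv f g) ≤ ucat f := by
  obtain ⟨hw, hsum, hp, hf⟩ := hmix
  have hmix' : IsUnimodalMixture w (fun m => conv (p m) g) (conv f g) := by
    refine ⟨hw, hsum, hpg, fun x => ?_⟩
    have key : ∀ y, f (x - y) * g y = ∑ m, w m * (p m (x - y) * g y) := by
      intro y
      rw [← hf (x - y), Finset.sum_mul]
      simp [mul_assoc]
    calc ∑ m, w m * conv (p m) g x
        = ∑ m, ∫ y, w m * (p m (x - y) * g y) := by
          refine Finset.sum_congr rfl fun m _ => ?_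
          rw [integral_const_mul]; rfl
      _ = ∫ y, ∑ m, w m * (p m (x - y) * g y) := by
          rw [integral_finset_sum]
          intro m _
          exact (hint m x).const_mul _
      _ = conv f g x := by
          unfold conv
          exact integral_congr_ae (Filter.Eventually.of_forall fun y => (key y).symm)
  refine ⟨hmix', ?_⟩
  rw [← hM]
  exact Nat.sInf_le ⟨w, _, hmix'⟩
end

section
/- For the three-component perturbation family of the convexity lemma, the endpoint values satisfy g(0) = J((π_1+π_2, π_3), ((π_1 p_1 + π_2 p_2)/(π_1+π_2), p_3)) and g(1) = J((π_1, π_2+π_3), (p_1, (π_2 p_2 + π_3 p_3)/(π_2+π_3))), and both g(0) ≤ J(π,p) and g(1) ≤ J(π,p). -/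
open MeasureTheory Real

/-! Merging two components of a mixture does not decrease the weighted entropy, by pointwise
concavity of `negMulLog`, so merging lowers the Jensen–Shannon divergence. At the endpoints of
the path the middle component is absorbed entirely by one of its neighbours. -/

lemma entropy_eq_integral_negMulLog (f : ℝ → ℝ) : entropy f = ∫ x, negMulLog (f x) := by
  simp only [entropy, negMulLog_eq_neg, integral_neg]

lemma integrable_negMulLog_comp {f : ℝ → ℝ} (hf : Integrable (fun x => f x * log (f x))) :
    Integrable (fun x => negMulLog (f x)) := by
  simpa only [negMulLog_eq_neg] using hf.fun_neg

lemma mul_entropy_mul_div_self (c : ℝ) (f : ℝ → ℝ) :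
    c * entropy (fun x => c * f x / c) = c * entropy f := by
  rcases eq_or_ne c 0 with rfl | hc
  · simp
  · simp only [mul_div_cancel_left₀ _ hc]

lemma mul_negMulLog_add_mul_negMulLog_le {a b u v : ℝ} (ha : 0 ≤ a) (hb : 0 ≤ b)
    (hu : 0 ≤ u) (hv : 0 ≤ v) :
    a * negMulLog u + b * negMulLog v ≤ (a + b) * negMulLog ((a * u + b * v) / (a + b)) := by
  rcases (add_nonneg ha hb).eq_or_lt with hab | hab
  · obtain ⟨rfl, rfl⟩ : a = 0 ∧ b = 0 := by constructor <;> linarith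
    simp
  have hconc := concaveOn_negMulLog.2 (Set.mem_Ici.2 hu) (Set.mem_Ici.2 hv)
    (div_nonneg ha hab.le) (div_nonneg hb hab.le) (by field_simp)
  simp only [smul_eq_mul] at hconc
  calc a * negMulLog u + b * negMulLog v
      = (a + b) * (a / (a + b) * negMulLog u + b / (a + b) * negMulLog v) := by
        field_simp
    _ ≤ (a + b) * negMulLog (a / (a + b) * u + b / (a + b) * v) := by gcongr
    _ = (a + b) * negMulLog ((a * u + b * v) / (a + b)) := by
        congr 2; field_simp

lemma mul_entropy_add_mul_entropy_le {a b : ℝ} (ha : 0 ≤ a) (hb : 0 ≤ b) {p q : ℝ → ℝ}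
    (hp : ∀ x, 0 ≤ p x) (hq : ∀ x, 0 ≤ q x)
    (hp_ent : Integrable (fun x => p x * log (p x)))
    (hq_ent : Integrable (fun x => q x * log (q x)))
    (hpq_ent : Integrable (fun x => ((a * p x + b * q x) / (a + b))
      * log ((a * p x + b * q x) / (a + b)))) :
    a * entropy p + b * entropy q
      ≤ (a + b) * entropy (fun x => (a * p x + b * q x) / (a + b)) := by
  have hp_int := (integrable_negMulLog_comp hp_ent).const_mul a
  have hq_int := (integrable_negMulLog_comp hq_ent).const_mul b
  simp only [entropy_eq_integral_negMulLog, ← integral_const_mul]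
  rw [← integral_add hp_int hq_int]
  exact integral_mono (hp_int.add hq_int) ((integrable_negMulLog_comp hpq_ent).const_mul _)
    fun x => mul_negMulLog_add_mul_negMulLog_le ha hb (hp x) (hq x)

lemma g_zero (w1 w2 w3 : ℝ) (p1 p2 p3 : ℝ → ℝ) :
    g w1 w2 w3 p1 p2 p3 0
      = entropy (fun x => w1 * p1 x + w2 * p2 x + w3 * p3 x)
        - ((w1 + w2) * entropy (fun x => (w1 * p1 x + w2 * p2 x) / (w1 + w2))
           + w3 * entropy p3) := by
  unfold g p12t p23t
  simp only [sub_zero, one_mul, zero_mul, zero_add, mul_entropy_mul_div_self]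

lemma g_one (w1 w2 w3 : ℝ) (p1 p2 p3 : ℝ → ℝ) :
    g w1 w2 w3 p1 p2 p3 1
      = entropy (fun x => w1 * p1 x + w2 * p2 x + w3 * p3 x)
        - (w1 * entropy p1
           + (w2 + w3) * entropy (fun x => (w2 * p2 x + w3 * p3 x) / (w2 + w3))) := by
  unfold g p12t p23t
  simp only [sub_self, one_mul, zero_mul, add_zero, mul_entropy_mul_div_self]

theorem g_endpoints_general
    (w1 w2 w3 : ℝ) (h1 : 0 < w1) (h2 : 0 < w2) (h3 : 0 < w3)
    (p1 p2 p3 : ℝ → ℝ)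
    (hp1 : ∀ x, 0 ≤ p1 x) (hp2 : ∀ x, 0 ≤ p2 x) (hp3 : ∀ x, 0 ≤ p3 x)
    (hent1 : Integrable (fun x => p1 x * Real.log (p1 x)))
    (hent2 : Integrable (fun x => p2 x * Real.log (p2 x)))
    (hent3 : Integrable (fun x => p3 x * Real.log (p3 x)))
    (hent12 : Integrable (fun x => ((w1 * p1 x + w2 * p2 x) / (w1 + w2))
        * Real.log ((w1 * p1 x + w2 * p2 x) / (w1 + w2))))
    (hent23 : Integrable (fun x => ((w2 * p2 x + w3 * p3 x) / (w2 + w3))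
        * Real.log ((w2 * p2 x + w3 * p3 x) / (w2 + w3)))) :
    g w1 w2 w3 p1 p2 p3 0
        = entropy (fun x => w1 * p1 x + w2 * p2 x + w3 * p3 x)
          - ((w1 + w2) * entropy (fun x => (w1 * p1 x + w2 * p2 x) / (w1 + w2))
             + w3 * entropy p3) ∧
      g w1 w2 w3 p1 p2 p3 1
        = entropy (fun x => w1 * p1 x + w2 * p2 x + w3 * p3 x)
          - (w1 * entropy p1
             + (w2 + w3) * entropy (fun x => (w2 * p2 x + w3 * p3 x) / (w2 + w3))) ∧
      g w1 w2 w3 p1 p2 p3 0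
        ≤ entropy (fun x => w1 * p1 x + w2 * p2 x + w3 * p3 x)
          - (w1 * entropy p1 + w2 * entropy p2 + w3 * entropy p3) ∧
      g w1 w2 w3 p1 p2 p3 1
        ≤ entropy (fun x => w1 * p1 x + w2 * p2 x + w3 * p3 x)
          - (w1 * entropy p1 + w2 * entropy p2 + w3 * entropy p3) := by
  have merge12 := mul_entropy_add_mul_entropy_le h1.le h2.le hp1 hp2 hent1 hent2 hent12
  have merge23 := mul_entropy_add_mul_entropy_le h2.le h3.le hp2 hp3 hent2 hent3 hent23
  refine ⟨g_zero .., g_one .., ?_, ?_⟩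
  · rw [g_zero]; linarith
  · rw [g_one]; linarith

/-- Endpoint values of the perturbation path are merged-mixture divergences,
and both are dominated by the Jensen–Shannon divergence of the original
three-component mixture. -/
theorem g_endpoints
    (w1 w2 w3 : ℝ) (h1 : 0 < w1) (h2 : 0 < w2) (h3 : 0 < w3)
    (h1' : w1 ≤ 1) (h2' : w2 ≤ 1) (h3' : w3 ≤ 1)
    (hsum : w1 + w2 + w3 = 1)
    (p1 p2 p3 : ℝ → ℝ)
    (hp1 : ∀ x, 0 ≤ p1 x) (hp2 : ∀ x, 0 ≤ p2 x) (hp3 : ∀ x, 0 ≤ p3 x)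
    (hi1 : ∫ x, p1 x = 1) (hi2 : ∫ x, p2 x = 1) (hi3 : ∫ x, p3 x = 1)
    (hent1 : Integrable (fun x => p1 x * Real.log (p1 x)))
    (hent2 : Integrable (fun x => p2 x * Real.log (p2 x)))
    (hent3 : Integrable (fun x => p3 x * Real.log (p3 x)))
    (hmix : Integrable (fun x => (w1 * p1 x + w2 * p2 x + w3 * p3 x)
        * Real.log (w1 * p1 x + w2 * p2 x + w3 * p3 x)))
    (hent12 : Integrable (fun x => ((w1 * p1 x + w2 * p2 x) / (w1 + w2))
        * Real.log ((w1 * p1 x + w2 * p2 x) / (w1 + w2))))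
    (hent23 : Integrable (fun x => ((w2 * p2 x + w3 * p3 x) / (w2 + w3))
        * Real.log ((w2 * p2 x + w3 * p3 x) / (w2 + w3)))) :
    g w1 w2 w3 p1 p2 p3 0
        = entropy (fun x => w1 * p1 x + w2 * p2 x + w3 * p3 x)
          - ((w1 + w2) * entropy (fun x => (w1 * p1 x + w2 * p2 x) / (w1 + w2))
             + w3 * entropy p3) ∧
      g w1 w2 w3 p1 p2 p3 1
        = entropy (fun x => w1 * p1 x + w2 * p2 x + w3 * p3 x)
          - (w1 * entropy p1
             + (w2 + w3) * entropy (fun x => (w2 * p2 x + w3 * p3 x) / (w2 + w3))) ∧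
      g w1 w2 w3 p1 p2 p3 0
        ≤ entropy (fun x => w1 * p1 x + w2 * p2 x + w3 * p3 x)
          - (w1 * entropy p1 + w2 * entropy p2 + w3 * entropy p3) ∧
      g w1 w2 w3 p1 p2 p3 1
        ≤ entropy (fun x => w1 * p1 x + w2 * p2 x + w3 * p3 x)
          - (w1 * entropy p1 + w2 * entropy p2 + w3 * entropy p3) :=
  g_endpoints_general w1 w2 w3 h1 h2 h3 p1 p2 p3 hp1 hp2 hp3 hent1 hent2 hent3 hent12 hent23
end
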